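/- p₀(n) = 1/n is a threshold function for the property that G_{n,p} contains a triangle: if p ≪ 1/n then P(G_{n,p} contains a triangle) → 0, and if p ≫ 1/n then P(G_{n,p} contains a triangle) → 1. -/

import Mathlib

open Classical in
/-- Probability that the Erdős–Rényi random graph `G_{n,p}` (on vertex set `Fin n`,
each potential edge present independently with probability `p`) satisfies `P`. -/
noncomputable def erProb (n : ℕ) (p : ℝ) (P : SimpleGraph (Fin n) → Prop) : ℝ :=
  ∑ G : SimpleGraph (Fin n),
    if P G then p ^ (Nat.card G.edgeSet) * (1 - p) ^ (n.choose 2 - Nat.card G.edgeSet) else 0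

/-!
The expected number of triangles in `G_{n,p}` is `C(n,3) p³ ≤ (np)³`, and it bounds the
probability that a triangle exists. Conversely, if `X` counts triangles, Cauchy–Schwarz gives
`(E X)² ≤ P(X ≠ 0) · E X²`, and `E X²` is the sum over pairs of triangles of `p` to the
number of edges of their union. Pairs with at most one common vertex share no edge and
contribute at most `(E X)²`; equal pairs and pairs with two common vertices (at most `3n`
partners for each triangle) contribute `C(n,3) (p³ + 3n p⁵)`. Since `C(n,3) ≥ n³/27`, this
yields `P(no triangle) ≤ 27/(np)³ + 81/(np)²`.
-/

open Finset Filter Topology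

lemma sq_sum_mul_le_sum_filter_mul_sum_mul_sq {ι : Type*} (S : Finset ι) (w X : ι → ℝ)
    (hw : ∀ i ∈ S, 0 ≤ w i) :
    (∑ i ∈ S, w i * X i) ^ 2
      ≤ (∑ i ∈ S with X i ≠ 0, w i) * ∑ i ∈ S, w i * X i ^ 2 := by
  calc (∑ i ∈ S, w i * X i) ^ 2 = (∑ i ∈ S with X i ≠ 0, w i * X i) ^ 2 := by
        rw [sum_filter_of_ne fun i _ h => right_ne_zero_of_mul h]
    _ ≤ (∑ i ∈ S with X i ≠ 0, w i) * ∑ i ∈ S with X i ≠ 0, w i * X i ^ 2 :=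
        sum_sq_le_sum_mul_sum_of_sq_le_mul _ (fun i hi => hw i (mem_filter.1 hi).1)
          (fun i hi => mul_nonneg (hw i (mem_filter.1 hi).1) (sq_nonneg _))
          fun i _ => le_of_eq (by ring)
    _ ≤ (∑ i ∈ S with X i ≠ 0, w i) * ∑ i ∈ S, w i * X i ^ 2 :=
        mul_le_mul_of_nonneg_left
          (sum_le_sum_of_subset_of_nonneg (filter_subset _ _)
            fun i hi _ => mul_nonneg (hw i hi) (sq_nonneg _))
          (sum_nonneg fun i hi => hw i (mem_filter.1 hi).1)

section BernoulliWeight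

variable {α : Type*}

noncomputable def bernoulliWeight (A : Finset α) (q : ℝ) (s : Finset α) : ℝ :=
  q ^ #s * (1 - q) ^ (#A - #s)

variable {A B : Finset α} {q : ℝ}

lemma bernoulliWeight_nonneg (hq0 : 0 ≤ q) (hq1 : q ≤ 1) (s : Finset α) :
    0 ≤ bernoulliWeight A q s :=
  mul_nonneg (pow_nonneg hq0 _) (pow_nonneg (sub_nonneg.2 hq1) _)

variable [DecidableEq α]

lemma sum_bernoulliWeight_filter_superset (hB : B ⊆ A) :
    ∑ s ∈ A.powerset with B ⊆ s, bernoulliWeight A q s = q ^ #B := by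
  -- expand `∏ a ∈ A, (q + [a ∉ B] (1 - q)) = q ^ #B` over the subsets of `A`
  have hcompl : ∀ s ∈ A.powerset, (∏ a ∈ A \ s, if a ∈ B then (0 : ℝ) else 1 - q)
      = if B ⊆ s then (1 - q) ^ (#A - #s) else 0 := by
    intro s hs
    split_ifs with hBs
    · rw [prod_congr rfl fun a ha => if_neg fun haB => (mem_sdiff.1 ha).2 (hBs haB),
        prod_const, card_sdiff_of_subset (mem_powerset.1 hs)]
    · obtain ⟨a, haB, has⟩ := not_subset.1 hBs
      exact prod_eq_zero (mem_sdiff.2 ⟨hB haB, has⟩) (if_pos haB)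
  calc ∑ s ∈ A.powerset with B ⊆ s, bernoulliWeight A q s
      = ∑ s ∈ A.powerset, (∏ _ ∈ s, q) * ∏ a ∈ A \ s, if a ∈ B then 0 else 1 - q := by
        rw [sum_filter]
        refine sum_congr rfl fun s hs => ?_
        rw [hcompl s hs, prod_const, mul_ite, mul_zero, bernoulliWeight]
    _ = ∏ a ∈ A, (q + if a ∈ B then 0 else 1 - q) := (prod_add _ _ A).symm
    _ = ∏ a ∈ A, if a ∈ B then q else 1 := prod_congr rfl fun a _ => by split_ifs <;> ring
    _ = q ^ #B := by rw [prod_ite_mem, inter_eq_right.2 hB, prod_const]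

lemma sum_bernoulliWeight : ∑ s ∈ A.powerset, bernoulliWeight A q s = 1 := by
  simpa using sum_bernoulliWeight_filter_superset (q := q) (empty_subset A)

variable {ι : Type*} {I : Finset ι} {T : ι → Finset α}

noncomputable def probContainsSome (A : Finset α) (q : ℝ) (I : Finset ι)
    (T : ι → Finset α) : ℝ :=
  ∑ s ∈ A.powerset with ∃ i ∈ I, T i ⊆ s, bernoulliWeight A q s

lemma sum_bernoulliWeight_mul_card_filter_subset (hT : ∀ i ∈ I, T i ⊆ A) :
    ∑ s ∈ A.powerset, bernoulliWeight A q s * #{i ∈ I | T i ⊆ s}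
      = ∑ i ∈ I, q ^ #(T i) := by
  simp_rw [natCast_card_filter, mul_sum, mul_ite, mul_one, mul_zero]
  rw [sum_comm]
  refine sum_congr rfl fun i hi => ?_
  rw [← sum_filter, sum_bernoulliWeight_filter_superset (hT i hi)]

lemma sum_bernoulliWeight_mul_card_filter_subset_sq (hT : ∀ i ∈ I, T i ⊆ A) :
    ∑ s ∈ A.powerset, bernoulliWeight A q s * #{i ∈ I | T i ⊆ s} ^ 2
      = ∑ i ∈ I, ∑ j ∈ I, q ^ #(T i ∪ T j) := by
  have hprod : ∀ s, bernoulliWeight A q s * (#{i ∈ I | T i ⊆ s} : ℝ) ^ 2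
      = ∑ i ∈ I, ∑ j ∈ I, if T i ∪ T j ⊆ s then bernoulliWeight A q s else 0 := by
    intro s
    simp_rw [natCast_card_filter, sq, sum_mul_sum, mul_sum, union_subset_iff, ite_and]
    refine sum_congr rfl fun i _ => sum_congr rfl fun j _ => ?_
    split_ifs <;> simp
  simp_rw [hprod]
  rw [sum_comm]
  refine sum_congr rfl fun i hi => ?_
  rw [sum_comm]
  refine sum_congr rfl fun j hj => ?_
  rw [← sum_filter, sum_bernoulliWeight_filter_superset (union_subset (hT i hi) (hT j hj))]

lemma probContainsSome_le_sum (hT : ∀ i ∈ I, T i ⊆ A) (hq0 : 0 ≤ q) (hq1 : q ≤ 1) :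
    probContainsSome A q I T ≤ ∑ i ∈ I, q ^ #(T i) := by
  rw [← sum_bernoulliWeight_mul_card_filter_subset hT]
  calc probContainsSome A q I T
      ≤ ∑ s ∈ A.powerset with ∃ i ∈ I, T i ⊆ s,
          bernoulliWeight A q s * #{i ∈ I | T i ⊆ s} := by
        refine sum_le_sum fun s hs =>
          le_mul_of_one_le_right (bernoulliWeight_nonneg hq0 hq1 s) ?_
        rw [Nat.one_le_cast, Nat.one_le_iff_ne_zero, card_ne_zero, filter_nonempty_iff]
        exact (mem_filter.1 hs).2
    _ ≤ ∑ s ∈ A.powerset, bernoulliWeight A q s * #{i ∈ I | T i ⊆ s} :=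
        sum_le_sum_of_subset_of_nonneg (filter_subset _ _)
          fun s _ _ => mul_nonneg (bernoulliWeight_nonneg hq0 hq1 s) (Nat.cast_nonneg _)

lemma sq_sum_le_probContainsSome_mul (hT : ∀ i ∈ I, T i ⊆ A) (hq0 : 0 ≤ q) (hq1 : q ≤ 1) :
    (∑ i ∈ I, q ^ #(T i)) ^ 2
      ≤ probContainsSome A q I T * ∑ i ∈ I, ∑ j ∈ I, q ^ #(T i ∪ T j) := by
  rw [probContainsSome, ← sum_bernoulliWeight_mul_card_filter_subset hT,
    ← sum_bernoulliWeight_mul_card_filter_subset_sq hT]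
  convert sq_sum_mul_le_sum_filter_mul_sum_mul_sq A.powerset _ _
    (fun s _ => bernoulliWeight_nonneg hq0 hq1 s) using 3
  exact filter_congr fun s _ => by rw [Nat.cast_ne_zero, card_ne_zero, filter_nonempty_iff]

lemma probContainsSome_nonneg (hq0 : 0 ≤ q) (hq1 : q ≤ 1) : 0 ≤ probContainsSome A q I T :=
  sum_nonneg fun s _ => bernoulliWeight_nonneg hq0 hq1 s

lemma probContainsSome_le_one (hq0 : 0 ≤ q) (hq1 : q ≤ 1) : probContainsSome A q I T ≤ 1 :=
  (sum_le_sum_of_subset_of_nonneg (filter_subset _ _)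
    fun s _ _ => bernoulliWeight_nonneg hq0 hq1 s).trans_eq sum_bernoulliWeight

lemma one_sub_probContainsSome_le (hT : ∀ i ∈ I, T i ⊆ A) (hq0 : 0 ≤ q) (hq1 : q ≤ 1)
    (hμ : 0 < ∑ i ∈ I, q ^ #(T i)) {δ : ℝ}
    (hδ : ∑ i ∈ I, ∑ j ∈ I, q ^ #(T i ∪ T j) ≤ (∑ i ∈ I, q ^ #(T i)) ^ 2 + δ) :
    1 - probContainsSome A q I T ≤ δ / (∑ i ∈ I, q ^ #(T i)) ^ 2 := by
  have hsecond := sq_sum_le_probContainsSome_mul (A := A) hT hq0 hq1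
  have hP0 := probContainsSome_nonneg (A := A) (I := I) (T := T) hq0 hq1
  have hP1 := probContainsSome_le_one (A := A) (I := I) (T := T) hq0 hq1
  have hM0 : 0 ≤ ∑ i ∈ I, ∑ j ∈ I, q ^ #(T i ∪ T j) := by positivity
  have hδ0 : 0 ≤ δ := by nlinarith [mul_le_mul_of_nonneg_right hP1 hM0]
  rw [le_div_iff₀ (by positivity)]
  nlinarith [mul_le_mul_of_nonneg_left hδ hP0, mul_le_mul_of_nonneg_right hP1 hδ0]

end BernoulliWeight

section CliqueEdges

variable {V : Type*} [DecidableEq V]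

def cliqueEdges (t : Finset V) : Finset (Sym2 V) := {e ∈ t.sym2 | ¬e.IsDiag}

lemma mem_cliqueEdges {t : Finset V} {e : Sym2 V} :
    e ∈ cliqueEdges t ↔ (∀ a ∈ e, a ∈ t) ∧ ¬e.IsDiag := by
  rw [cliqueEdges, mem_filter, mem_sym2_iff]

lemma card_cliqueEdges (t : Finset V) : #(cliqueEdges t) = (#t).choose 2 := by
  rw [cliqueEdges, sym2_eq_image, Sym2.filter_image_mk_not_isDiag, Sym2.card_image_offDiag]

lemma cliqueEdges_inter (s t : Finset V) :
    cliqueEdges (s ∩ t) = cliqueEdges s ∩ cliqueEdges t := by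
  ext e
  simp only [mem_inter, mem_cliqueEdges]
  grind

lemma cliqueEdges_subset_edgeFinset_iff {G : SimpleGraph V} [Fintype G.edgeSet]
    {t : Finset V} :
    cliqueEdges t ⊆ G.edgeFinset ↔ G.IsClique t := by
  rw [SimpleGraph.isClique_iff]
  constructor
  · intro h a ha b hb hab
    exact SimpleGraph.mem_edgeFinset.1 <| h <| mem_cliqueEdges.2
      ⟨fun x hx => by rcases Sym2.mem_iff.1 hx with rfl | rfl; exacts [ha, hb], by simpa⟩
  · intro h e he
    induction e using Sym2.ind with
    | h a b =>
      obtain ⟨hab, hne⟩ := mem_cliqueEdges.1 he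
      exact SimpleGraph.mem_edgeFinset.2 <|
        h (hab a (Sym2.mem_mk_left a b)) (hab b (Sym2.mem_mk_right a b)) (by simpa using hne)

lemma card_cliqueEdges_union_add_choose (s t : Finset V) :
    #(cliqueEdges s ∪ cliqueEdges t) + (#(s ∩ t)).choose 2
      = (#s).choose 2 + (#t).choose 2 := by
  rw [← card_cliqueEdges, cliqueEdges_inter, card_union_add_card_inter, card_cliqueEdges,
    card_cliqueEdges]

lemma pow_card_cliqueEdges_union_le {s t : Finset V} (hs : #s = 3) (ht : #t = 3) {q : ℝ}
    (hq0 : 0 ≤ q) :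
    q ^ #(cliqueEdges s ∪ cliqueEdges t)
      ≤ q ^ 6 + (if s = t then q ^ 3 else 0) + (if #(s ∩ t) = 2 then q ^ 5 else 0) := by
  have hunion := card_cliqueEdges_union_add_choose s t
  have h32 : (3 : ℕ).choose 2 = 3 := rfl
  rw [hs, ht, h32] at hunion
  have h5 : 0 ≤ (if #(s ∩ t) = 2 then q ^ 5 else 0) := by positivity
  by_cases hst : s = t
  · subst hst
    rw [union_self, card_cliqueEdges, hs, h32, if_pos rfl]
    linarith [pow_nonneg hq0 6]
  have hk : #(s ∩ t) < 3 := by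
    refine lt_of_le_of_ne (hs ▸ card_le_card inter_subset_left) fun h3 => hst ?_
    have hsub : s ⊆ t := inter_eq_left.1 (eq_of_subset_of_card_le inter_subset_left (by omega))
    exact eq_of_subset_of_card_le hsub (by omega)
  rw [if_neg hst, add_zero]
  interval_cases #(s ∩ t)
  · rw [show #(cliqueEdges s ∪ cliqueEdges t) = 6 by simpa using hunion]
    linarith
  · rw [show #(cliqueEdges s ∪ cliqueEdges t) = 6 by simpa using hunion]
    linarith
  · rw [show #(cliqueEdges s ∪ cliqueEdges t) = 5 by simpa using hunion, if_pos rfl]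
    linarith [pow_nonneg hq0 6]

lemma cliqueEdges_subset_edgeFinset_top [Fintype V] (t : Finset V) :
    cliqueEdges t ⊆ (⊤ : SimpleGraph V).edgeFinset :=
  cliqueEdges_subset_edgeFinset_iff.2 fun _ _ _ _ hne => hne

variable [Fintype V]

lemma exists_triangle_iff_exists_cliqueEdges_subset {G : SimpleGraph V} [Fintype G.edgeSet] :
    (∃ a b c, G.Adj a b ∧ G.Adj a c ∧ G.Adj b c)
      ↔ ∃ t ∈ powersetCard 3 univ, cliqueEdges t ⊆ G.edgeFinset := by
  simp_rw [cliqueEdges_subset_edgeFinset_iff, mem_powersetCard_univ, and_comm (a := #_ = 3),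
    ← SimpleGraph.isNClique_iff, SimpleGraph.is3Clique_iff]
  constructor
  · rintro ⟨a, b, c, hab, hac, hbc⟩
    exact ⟨_, a, b, c, hab, hac, hbc, rfl⟩
  · rintro ⟨_, a, b, c, hab, hac, hbc, -⟩
    exact ⟨a, b, c, hab, hac, hbc⟩

lemma card_filter_card_inter_eq_two_le {s : Finset V} (hs : #s = 3) :
    #{t ∈ powersetCard 3 univ | #(s ∩ t) = 2} ≤ 3 * Fintype.card V := by
  calc #{t ∈ powersetCard 3 univ | #(s ∩ t) = 2}
      ≤ #((s.powersetCard 2 ×ˢ univ).image fun ux : Finset V × V => insert ux.2 ux.1) := by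
        refine card_le_card fun t ht => ?_
        obtain ⟨ht3, hst⟩ := mem_filter.1 ht
        rw [mem_powersetCard_univ] at ht3
        obtain ⟨x, hxt, hx⟩ :=
          exists_mem_notMem_of_card_lt_card (s := s ∩ t) (t := t) (by omega)
        refine mem_image.2 ⟨(s ∩ t, x), mem_product.2 ⟨mem_powersetCard.2
          ⟨inter_subset_left, hst⟩, mem_univ x⟩, ?_⟩
        refine eq_of_subset_of_card_le (insert_subset hxt inter_subset_right) ?_
        rw [card_insert_of_notMem hx]
        omega
    _ ≤ #(s.powersetCard 2 ×ˢ (univ : Finset V)) := card_image_le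
    _ = 3 * Fintype.card V := by rw [card_product, card_powersetCard, hs, card_univ]; rfl

lemma sum_pow_card_cliqueEdges_powersetCard_three (q : ℝ) :
    ∑ t ∈ powersetCard 3 (univ : Finset V), q ^ #(cliqueEdges t)
      = (Fintype.card V).choose 3 * q ^ 3 := by
  have h3 : ∀ t ∈ powersetCard 3 (univ : Finset V), q ^ #(cliqueEdges t) = q ^ 3 :=
    fun t ht => by rw [card_cliqueEdges, mem_powersetCard_univ.1 ht]; rfl
  rw [sum_congr rfl h3, sum_const, card_powersetCard, card_univ, nsmul_eq_mul]

lemma sum_sum_pow_card_cliqueEdges_union_le {q : ℝ} (hq0 : 0 ≤ q) :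
    ∑ s ∈ powersetCard 3 (univ : Finset V), ∑ t ∈ powersetCard 3 univ,
        q ^ #(cliqueEdges s ∪ cliqueEdges t)
      ≤ ((Fintype.card V).choose 3 * q ^ 3) ^ 2
        + (Fintype.card V).choose 3 * (q ^ 3 + 3 * Fintype.card V * q ^ 5) := by
  set I := powersetCard 3 (univ : Finset V)
  have hI : (#I : ℝ) = (Fintype.card V).choose 3 := by
    rw [card_powersetCard, card_univ]
  have hrow : ∀ s ∈ I, ∑ t ∈ I, q ^ #(cliqueEdges s ∪ cliqueEdges t)
      ≤ #I * q ^ 6 + (q ^ 3 + 3 * Fintype.card V * q ^ 5) := by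
    intro s hs
    rw [mem_powersetCard_univ] at hs
    have hcount : (#{t ∈ I | #(s ∩ t) = 2} : ℝ) ≤ 3 * Fintype.card V := by
      exact_mod_cast card_filter_card_inter_eq_two_le hs
    calc ∑ t ∈ I, q ^ #(cliqueEdges s ∪ cliqueEdges t)
        ≤ ∑ t ∈ I,
            (q ^ 6 + (if s = t then q ^ 3 else 0) + (if #(s ∩ t) = 2 then q ^ 5 else 0)) :=
          sum_le_sum fun t ht =>
            pow_card_cliqueEdges_union_le hs (mem_powersetCard_univ.1 ht) hq0
      _ = #I * q ^ 6 + q ^ 3 + #{t ∈ I | #(s ∩ t) = 2} * q ^ 5 := by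
          rw [sum_add_distrib, sum_add_distrib, sum_ite_eq, if_pos (mem_powersetCard_univ.2 hs),
            sum_const, ← sum_filter, sum_const, nsmul_eq_mul, nsmul_eq_mul]
      _ ≤ #I * q ^ 6 + (q ^ 3 + 3 * Fintype.card V * q ^ 5) := by
          nlinarith [pow_nonneg hq0 5]
  calc ∑ s ∈ I, ∑ t ∈ I, q ^ #(cliqueEdges s ∪ cliqueEdges t)
      ≤ ∑ s ∈ I, (#I * q ^ 6 + (q ^ 3 + 3 * Fintype.card V * q ^ 5)) := sum_le_sum hrow
    _ = _ := by rw [sum_const, nsmul_eq_mul, hI]; ring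

end CliqueEdges

lemma cube_le_mul_choose_three {n : ℕ} (hn : 3 ≤ n) : n ^ 3 ≤ 27 * n.choose 3 := by
  have h := Nat.descFactorial_eq_factorial_mul_choose n 3
  obtain ⟨m, rfl⟩ := Nat.exists_eq_add_of_le' hn
  norm_num [Nat.descFactorial_succ, Nat.factorial, show m + 3 - 2 = m + 1 by omega] at h
  have : 6 * (m + 3) ^ 3 ≤ 27 * ((m + 1) * ((m + 2) * (m + 3))) := by
    ring_nf
    omega
  omega

open Classical in
lemma sum_simpleGraph_eq_sum_powerset {V M : Type*} [Fintype V] [DecidableEq V]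
    [AddCommMonoid M] (F : Finset (Sym2 V) → M) :
    ∑ G : SimpleGraph V, F G.edgeFinset
      = ∑ s ∈ (⊤ : SimpleGraph V).edgeFinset.powerset, F s := by
  refine sum_nbij' (fun G => G.edgeFinset) (fun s => SimpleGraph.fromEdgeSet s)
    (fun G _ => mem_powerset.2 (SimpleGraph.edgeFinset_mono le_top)) (fun _ _ => mem_univ _)
    (fun G _ => by simp) (fun s hs => ?_) (fun _ _ => rfl)
  ext e
  simp only [SimpleGraph.mem_edgeFinset, SimpleGraph.edgeSet_fromEdgeSet, Set.mem_sdiff,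
    mem_coe, and_iff_left_iff_imp]
  exact fun he => SimpleGraph.not_isDiag_of_mem_edgeFinset (mem_powerset.1 hs he)

open Classical in
lemma erProb_eq_sum (n : ℕ) (p : ℝ) (P : SimpleGraph (Fin n) → Prop) :
    erProb n p P = ∑ G : SimpleGraph (Fin n),
      if P G then bernoulliWeight (⊤ : SimpleGraph (Fin n)).edgeFinset p G.edgeFinset
      else 0 := by
  refine sum_congr rfl fun G _ => ?_
  rw [bernoulliWeight, SimpleGraph.card_edgeFinset_top_eq_card_choose_two, Fintype.card_fin,
    SimpleGraph.edgeFinset_card, Nat.card_eq_fintype_card]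

lemma erProb_nonneg {n : ℕ} {p : ℝ} (hp0 : 0 ≤ p) (hp1 : p ≤ 1)
    (P : SimpleGraph (Fin n) → Prop) :
    0 ≤ erProb n p P := by
  rw [erProb_eq_sum]
  exact sum_nonneg fun G _ => by split_ifs; exacts [bernoulliWeight_nonneg hp0 hp1 _, le_rfl]

lemma erProb_le_one {n : ℕ} {p : ℝ} (hp0 : 0 ≤ p) (hp1 : p ≤ 1)
    (P : SimpleGraph (Fin n) → Prop) :
    erProb n p P ≤ 1 := by
  classical
  rw [erProb_eq_sum]
  calc ∑ G : SimpleGraph (Fin n), (if P G then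
          bernoulliWeight (⊤ : SimpleGraph (Fin n)).edgeFinset p G.edgeFinset else 0)
      ≤ ∑ G : SimpleGraph (Fin n),
          bernoulliWeight (⊤ : SimpleGraph (Fin n)).edgeFinset p G.edgeFinset :=
        sum_le_sum fun G _ => by split_ifs; exacts [le_rfl, bernoulliWeight_nonneg hp0 hp1 _]
    _ = 1 := by rw [sum_simpleGraph_eq_sum_powerset, sum_bernoulliWeight]

lemma erProb_triangle_eq (n : ℕ) (p : ℝ) :
    erProb n p (fun G => ∃ a b c : Fin n, G.Adj a b ∧ G.Adj a c ∧ G.Adj b c)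
      = probContainsSome (⊤ : SimpleGraph (Fin n)).edgeFinset p (powersetCard 3 univ)
          cliqueEdges := by
  classical
  simp_rw [erProb_eq_sum, exists_triangle_iff_exists_cliqueEdges_subset, probContainsSome,
    sum_filter]
  convert sum_simpleGraph_eq_sum_powerset fun s =>
    if ∃ t ∈ powersetCard 3 univ, cliqueEdges t ⊆ s then
      bernoulliWeight (⊤ : SimpleGraph (Fin n)).edgeFinset p s else 0

lemma erProb_triangle_le {n : ℕ} {p : ℝ} (hp0 : 0 ≤ p) (hp1 : p ≤ 1) :
    erProb n p (fun G => ∃ a b c : Fin n, G.Adj a b ∧ G.Adj a c ∧ G.Adj b c)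
      ≤ (n * p) ^ 3 := by
  rw [erProb_triangle_eq]
  refine (probContainsSome_le_sum (fun t _ => cliqueEdges_subset_edgeFinset_top t)
    hp0 hp1).trans ?_
  rw [sum_pow_card_cliqueEdges_powersetCard_three, Fintype.card_fin, mul_pow]
  gcongr
  exact_mod_cast Nat.choose_le_pow n 3

lemma one_sub_erProb_triangle_le {n : ℕ} {p : ℝ} (hn : 3 ≤ n) (hp0 : 0 < p) (hp1 : p ≤ 1) :
    1 - erProb n p (fun G => ∃ a b c : Fin n, G.Adj a b ∧ G.Adj a c ∧ G.Adj b c)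
      ≤ 27 / (n * p) ^ 3 + 81 / (n * p) ^ 2 := by
  have hμ : 0 < ∑ t ∈ powersetCard 3 (univ : Finset (Fin n)), p ^ #(cliqueEdges t) := by
    rw [sum_pow_card_cliqueEdges_powersetCard_three, Fintype.card_fin]
    have := Nat.choose_pos hn
    positivity
  have hsecond := one_sub_probContainsSome_le (fun t _ => cliqueEdges_subset_edgeFinset_top t)
    hp0.le hp1 hμ <| by
      simpa only [sum_pow_card_cliqueEdges_powersetCard_three, Fintype.card_fin]
        using sum_sum_pow_card_cliqueEdges_union_le (V := Fin n) hp0.le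
  rw [← erProb_triangle_eq, sum_pow_card_cliqueEdges_powersetCard_three, Fintype.card_fin]
    at hsecond
  refine hsecond.trans ?_
  set C : ℝ := (n.choose 3 : ℝ)
  have hC0 : 0 < C := Nat.cast_pos.2 (Nat.choose_pos hn)
  have hratio : 1 ≤ 27 * C / n ^ 3 := by
    rw [one_le_div (by positivity)]
    unfold C
    exact_mod_cast cube_le_mul_choose_three hn
  have hbound : (27 / (n * p) ^ 3 + 81 / (n * p) ^ 2) * (C * p ^ 3) ^ 2
      = C * p ^ 3 * (27 * C / n ^ 3) + 3 * C * n * p ^ 4 * (27 * C / n ^ 3) := by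
    field_simp
    ring
  rw [div_le_iff₀ (by positivity), hbound, mul_add,
    show C * (3 * n * p ^ 5) = 3 * C * n * p ^ 5 by ring]
  gcongr ?_ + ?_
  · exact le_mul_of_one_le_right (by positivity) hratio
  · calc 3 * C * n * p ^ 5 ≤ 3 * C * n * p ^ 4 :=
          mul_le_mul_of_nonneg_left (pow_le_pow_of_le_one hp0.le hp1 (by norm_num))
            (by positivity)
      _ ≤ 3 * C * n * p ^ 4 * (27 * C / n ^ 3) := le_mul_of_one_le_right (by positivity) hratio

/-- `p₀(n) = 1/n` is a threshold function for `G_{n,p}` to contain a triangle: if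
`p ≪ 1/n` then `P(G_{n,p} ⊇ K₃) → 0`, and if `p ≫ 1/n` then `P(G_{n,p} ⊇ K₃) → 1`. -/
theorem triangle_threshold (p : ℕ → ℝ) (hp : ∀ n, 0 ≤ p n ∧ p n ≤ 1) :
    (Filter.Tendsto (fun n => p n / (1 / (n : ℝ))) Filter.atTop (nhds 0) →
      Filter.Tendsto
        (fun n => erProb n (p n) (fun G =>
          ∃ a b c : Fin n, G.Adj a b ∧ G.Adj a c ∧ G.Adj b c))
        Filter.atTop (nhds 0)) ∧
    (Filter.Tendsto (fun n => p n / (1 / (n : ℝ))) Filter.atTop Filter.atTop →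
      Filter.Tendsto
        (fun n => erProb n (p n) (fun G =>
          ∃ a b c : Fin n, G.Adj a b ∧ G.Adj a c ∧ G.Adj b c))
        Filter.atTop (nhds 1)) := by
  have hscale : (fun n : ℕ => p n / (1 / (n : ℝ))) = fun n : ℕ => (n : ℝ) * p n := by
    funext n
    rw [one_div, div_inv_eq_mul, mul_comm]
  rw [hscale]
  constructor
  · intro h
    refine squeeze_zero (fun n => erProb_nonneg (hp n).1 (hp n).2 _)
      (fun n => erProb_triangle_le (hp n).1 (hp n).2) ?_
    simpa using h.pow 3
  · intro h
    have hsmall : Tendsto (fun n : ℕ => 27 / ((n : ℝ) * p n) ^ 3 + 81 / ((n : ℝ) * p n) ^ 2)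
        atTop (𝓝 0) := by
      simpa using (tendsto_const_nhds.div_atTop ((tendsto_pow_atTop three_ne_zero).comp h)).add
        (tendsto_const_nhds.div_atTop ((tendsto_pow_atTop two_ne_zero).comp h))
    refine tendsto_of_tendsto_of_tendsto_of_le_of_le' (by simpa using hsmall.const_sub 1)
      tendsto_const_nhds ?_ (.of_forall fun n => erProb_le_one (hp n).1 (hp n).2 _)
    filter_upwards [eventually_ge_atTop 3, h.eventually_gt_atTop 0] with n hn hnp
    have hpn : 0 < p n := pos_of_mul_pos_right hnp (Nat.cast_nonneg n)
    linarith [one_sub_erProb_triangle_le hn hpn (hp n).2]
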